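/- Let K be a totally real number field with discriminant Δ, let P be a positive integer with P(O_K) ≤ P, and let S ⊆ O_K⁺ be a set such that every α ∈ O_K⁺ with N_{K/ℚ}(α) ≤ Δ can be written as α = s·u² for some s ∈ S and some unit u ∈ O_K^×. Then for every γ ∈ O_K⁺ there exist s ∈ S and x, y₁, …, y_P ∈ O_K such that γ = s·x² + y₁² + ⋯ + y_P². Equivalently, the diagonal quadratic form ∑_{s ∈ S} s·x_s² + y₁² + ⋯ + y_P² represents every element of O_K⁺. -/

import Mathlib

open NumberField

/-- A number field is totally real if every complex embedding has image contained in `ℝ`. -/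
def IsTotallyRealField (K : Type) [Field K] : Prop :=
  ∀ σ : K →+* ℂ, ∀ x : K, (σ x).im = 0

/-- An element of a field is totally positive if it is positive under every real embedding. -/
def TotallyPositive {K : Type} [Field K] (x : K) : Prop :=
  ∀ σ : K →+* ℝ, 0 < σ x

/-!
Descent on the trace. If `N(γ) > Δ`, Minkowski's theorem applied to the box
`|σ x| < √(σ γ)`, whose volume `2ⁿ √N(γ)` exceeds `2ⁿ √Δ`, gives `x ≠ 0` in `𝓞 K` with
`γ - x²` still totally positive; its trace is smaller by the positive integer `tr(x²)`.
Iterating, `γ = α + (sum of squares)` with `N(α) ≤ Δ`, and then `α = s u²` while the sum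
of squares needs only `P` squares.
-/

open InfinitePlace
open scoped NNReal

theorem IsTotallyRealField.isTotallyReal {K : Type} [Field K] (hK : IsTotallyRealField K) :
    IsTotallyReal K where
  isReal _ := isReal_iff.mpr <| ComplexEmbedding.isReal_iff.mpr <| RingHom.ext fun x =>
    Complex.conj_eq_iff_im.mpr (hK _ x)

theorem IsSumSq.exists_eq_sum_fin {R : Type*} [CommSemiring R] {s : R} (hs : IsSumSq s) :
    ∃ (t : ℕ) (β : Fin t → R), s = ∑ i, β i ^ 2 := by
  induction hs with
  | zero => exact ⟨0, Fin.elim0, by simp⟩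
  | sq_add a _ ih =>
    obtain ⟨t, β, rfl⟩ := ih
    exact ⟨t + 1, Fin.cons a β, by simp [Fin.sum_univ_succ, sq]⟩

theorem totallyPositive_sq {K : Type} [Field K] {x : K} (hx : x ≠ 0) :
    TotallyPositive (x ^ 2) := fun σ => by
  rw [map_pow]
  exact sq_pos_of_ne_zero ((map_ne_zero σ).mpr hx)

theorem NumberField.InfinitePlace.mk_ofReal_comp_apply {K : Type} [Field K] (σ : K →+* ℝ)
    (x : K) :
    mk (Complex.ofRealHom.comp σ) x = |σ x| := by
  simp [InfinitePlace.apply]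

section IsTotallyReal

variable {K : Type} [Field K] [NumberField K] [IsTotallyReal K]

theorem IsTotallyReal.discr_pos : 0 < discr K := by
  simpa using sign_discr K

theorem TotallyPositive.trace_pos {x : K} (hx : TotallyPositive x) :
    0 < Algebra.trace ℚ K x := by
  let r (σ : K →ₐ[ℚ] ℂ) : K →+* ℝ :=
    (IsTotallyReal.complexEmbedding_isReal (σ : K →+* ℂ)).embedding
  have hsum : ((Algebra.trace ℚ K x : ℚ) : ℂ) = ((∑ σ, r σ x : ℝ) : ℂ) := by
    rw [← eq_ratCast (algebraMap ℚ ℂ), trace_eq_sum_embeddings]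
    push_cast
    exact Finset.sum_congr rfl fun σ _ => (ComplexEmbedding.IsReal.coe_embedding_apply _ x).symm
  have : Nonempty (K →ₐ[ℚ] ℂ) := by
    rw [← Fintype.card_pos_iff, AlgHom.card]
    exact Module.finrank_pos
  have hpos : 0 < ∑ σ, r σ x := Finset.sum_pos (fun σ _ => hx (r σ)) Finset.univ_nonempty
  have hreal : ((Algebra.trace ℚ K x : ℚ) : ℝ) = ∑ σ, r σ x :=
    Complex.ofReal_injective (by rw [Complex.ofReal_ratCast, hsum])
  exact Rat.cast_pos.mp (hreal ▸ hpos)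

theorem TotallyPositive.intTrace_pos {x : 𝓞 K} (hx : TotallyPositive (x : K)) :
    0 < Algebra.intTrace ℤ (𝓞 K) x := by
  have h := hx.trace_pos
  rw [← Algebra.algebraMap_intTrace (A := ℤ), eq_intCast] at h
  exact_mod_cast h

open mixedEmbedding in
theorem IsTotallyReal.exists_ne_zero_lt_of_sqrt_discr_lt {f : InfinitePlace K → ℝ≥0}
    (h : NNReal.sqrt ‖discr K‖₊ < ∏ w, f w) :
    ∃ a : 𝓞 K, a ≠ 0 ∧ ∀ w, w a < f w := by
  refine exists_ne_zero_mem_ringOfIntegers_lt K ?_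
  -- With no complex places, the Minkowski bound is `√Δ · 2ⁿ` and the box has volume
  -- `2ⁿ ∏ f w`.
  rw [convexBodyLT_volume, minkowskiBound, volume_fundamentalDomain_fractionalIdealLatticeBasis,
    volume_fundamentalDomain_latticeBasis, mixedEmbedding.finrank, Units.val_one,
    FractionalIdeal.absNorm_one, Rat.cast_one, ENNReal.ofReal_one, one_mul, convexBodyLTFactor,
    IsTotallyReal.nrComplexPlaces_eq_zero, IsTotallyReal.finrank]
  simp only [IsTotallyReal.mult_eq, pow_one, pow_zero, mul_one]
  rw [one_mul, mul_comm]
  push_cast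
  exact ENNReal.mul_lt_mul_right (by simp) (by simp) (by exact_mod_cast h)

theorem exists_ne_zero_forall_sq_lt_of_discr_lt_norm {γ : K} (hγ : TotallyPositive γ)
    (h : (discr K : ℚ) < Algebra.norm ℚ γ) :
    ∃ x : 𝓞 K, x ≠ 0 ∧ ∀ σ : K →+* ℝ, σ x ^ 2 < σ γ := by
  have hD := IsTotallyReal.discr_pos (K := K)
  let f (w : InfinitePlace K) : ℝ≥0 := (√(w γ)).toNNReal
  have hf_coe (w : InfinitePlace K) : (f w : ℝ) = √(w γ) :=
    Real.coe_toNNReal _ (Real.sqrt_nonneg _)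
  have hf : NNReal.sqrt ‖discr K‖₊ < ∏ w, f w := by
    have hnorm : ∏ w : InfinitePlace K, w γ = Algebra.norm ℚ γ := by
      have hpos : (0 : ℚ) < Algebra.norm ℚ γ := lt_trans (by exact_mod_cast hD) h
      simpa [abs_of_pos hpos] using prod_eq_abs_norm γ
    rw [← NNReal.coe_lt_coe, NNReal.coe_prod]
    simp only [hf_coe, Real.coe_sqrt, coe_nnnorm, Int.norm_eq_abs]
    rw [← Real.sqrt_prod _ fun w _ => apply_nonneg w γ, hnorm,
      abs_of_pos (Int.cast_pos.mpr hD)]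
    exact Real.sqrt_lt_sqrt (by exact_mod_cast hD.le) (by exact_mod_cast h)
  obtain ⟨x, hx0, hx⟩ := IsTotallyReal.exists_ne_zero_lt_of_sqrt_discr_lt hf
  refine ⟨x, hx0, fun σ => ?_⟩
  have hσ : |σ x| < √|σ γ| := by
    have := hx (mk (Complex.ofRealHom.comp σ))
    rwa [hf_coe, mk_ofReal_comp_apply, mk_ofReal_comp_apply] at this
  rwa [abs_of_pos (hγ σ), Real.lt_sqrt (abs_nonneg _), sq_abs] at hσ

theorem exists_eq_add_isSumSq_of_totallyPositive {γ : 𝓞 K} (hγ : TotallyPositive (γ : K)) :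
    ∃ α q : 𝓞 K, TotallyPositive (α : K) ∧ Algebra.norm ℚ (α : K) ≤ discr K ∧ IsSumSq q ∧
      γ = α + q := by
  induction hn : (Algebra.intTrace ℤ (𝓞 K) γ).toNat using Nat.strong_induction_on
    generalizing γ with
  | _ n ih =>
    by_cases hsmall : Algebra.norm ℚ (γ : K) ≤ discr K
    · exact ⟨γ, 0, hγ, hsmall, .zero, (add_zero γ).symm⟩
    obtain ⟨x, hx0, hx⟩ :=
      exists_ne_zero_forall_sq_lt_of_discr_lt_norm hγ (not_le.mp hsmall)
    have hx2 : TotallyPositive ((x ^ 2 : 𝓞 K) : K) := by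
      push_cast
      exact totallyPositive_sq (RingOfIntegers.coe_ne_zero_iff.mpr hx0)
    have hγ' : TotallyPositive ((γ - x ^ 2 : 𝓞 K) : K) := fun σ => by
      have := hx σ
      push_cast
      rw [map_sub, map_pow]
      linarith
    have hlt : (Algebra.intTrace ℤ (𝓞 K) (γ - x ^ 2)).toNat < n := by
      have h1 := hx2.intTrace_pos
      have h2 := hγ'.intTrace_pos
      rw [map_sub] at h2 ⊢
      omega
    obtain ⟨α, q, hα, hαnorm, hq, hsum⟩ := ih _ hlt hγ' rfl
    exact ⟨α, x * x + q, hα, hαnorm, hq.sq_add x, by linear_combination hsum⟩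

end IsTotallyReal

theorem universal_form_construction_general (K : Type) [Field K] [NumberField K]
    (hK : IsTotallyRealField K)
    (P : ℕ)
    (hPyth : ∀ x : 𝓞 K, (∃ (t : ℕ) (β : Fin t → 𝓞 K), x = ∑ i, β i ^ 2) →
      ∃ y : Fin P → 𝓞 K, x = ∑ i, y i ^ 2)
    (S : Set (𝓞 K))
    (hSrep : ∀ α : 𝓞 K, TotallyPositive (α : K) →
      Algebra.norm ℚ (α : K) ≤ (NumberField.discr K : ℚ) →
      ∃ s ∈ S, ∃ u : (𝓞 K)ˣ, α = s * (u : 𝓞 K) ^ 2) :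
    ∀ γ : 𝓞 K, TotallyPositive (γ : K) →
      ∃ s ∈ S, ∃ (x : 𝓞 K) (y : Fin P → 𝓞 K), γ = s * x ^ 2 + ∑ i, y i ^ 2 := by
  have := hK.isTotallyReal
  intro γ hγ
  obtain ⟨α, q, hα, hαnorm, hq, rfl⟩ := exists_eq_add_isSumSq_of_totallyPositive hγ
  obtain ⟨s, hs, u, rfl⟩ := hSrep α hα hαnorm
  obtain ⟨y, rfl⟩ := hPyth q hq.exists_eq_sum_fin
  exact ⟨s, hs, u, y, rfl⟩

/-- If `P(𝓞 K) ≤ P` and `S` is a set of totally positive integers containing, up to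
multiplication by squares of units, every totally positive integer of norm at most `Δ`,
then the diagonal form `∑_{s ∈ S} s x_s² + y₁² + ⋯ + y_P²` represents every element
of `𝓞 K⁺`. -/
theorem universal_form_construction (K : Type) [Field K] [NumberField K]
    (hK : IsTotallyRealField K)
    (P : ℕ) (hPpos : 0 < P)
    (hPyth : ∀ x : 𝓞 K, (∃ (t : ℕ) (β : Fin t → 𝓞 K), x = ∑ i, β i ^ 2) →
      ∃ y : Fin P → 𝓞 K, x = ∑ i, y i ^ 2)
    (S : Set (𝓞 K)) (hS : ∀ s ∈ S, TotallyPositive ((s : 𝓞 K) : K))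
    (hSrep : ∀ α : 𝓞 K, TotallyPositive (α : K) →
      Algebra.norm ℚ (α : K) ≤ (NumberField.discr K : ℚ) →
      ∃ s ∈ S, ∃ u : (𝓞 K)ˣ, α = s * (u : 𝓞 K) ^ 2) :
    ∀ γ : 𝓞 K, TotallyPositive (γ : K) →
      ∃ s ∈ S, ∃ (x : 𝓞 K) (y : Fin P → 𝓞 K), γ = s * x ^ 2 + ∑ i, y i ^ 2 :=
  universal_form_construction_general K hK P hPyth S hSrep
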